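/- Let P be a finite set of points in ℝ² with diameter D > 0 attained by points p₁, p₂ ∈ P, let u = (p₁ − p₂)/D, let z = w_{u⊥}(P)/D, and let c ≥ 0 be a real constant. If β is a unit vector whose angle with the orientation of u, namely arccos(|⟨β, u⟩|), is at most (2c + 2)·arcsin(z), then w_{β⊥}(P) ≤ (4c + 6) · inf over all unit vectors γ of w_{γ⊥}(P). -/

import Mathlib

/-!
Measure every extent in an orthonormal frame `(g, g⊥)`: the extent along `v` is at most
`|⟪v, g⟫|` times the extent along `g` plus `|⟪v, g⊥⟫|` times the extent along `g⊥`.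
In the frame of the diameter `u` this bounds the width in orientation `β` by `zD + D sin θ`,
`θ` the angle between `β` and `u`. In the frame of an arbitrary `γ` it bounds `zD` by
`D |sin ∠(γ, u)|` plus the width in orientation `γ`; as the diameter `p₁ - p₂ = D u` alone
already forces the width in orientation `γ` to be at least `D |sin ∠(γ, u)|`, every width is
at least `zD / 2`. Finally concavity of `sin` on `[0, π]` turns `θ ≤ (2c+2) arcsin z` into
`sin θ ≤ (2c+2) z`.
-/

open Real
open scoped RealInnerProductSpace

noncomputable section

/-- The point of `ℝ²` with coordinates `a`, `b`. -/
def pt (a b : ℝ) : EuclideanSpace ℝ (Fin 2) :=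
  (WithLp.equiv 2 (Fin 2 → ℝ)).symm ![a, b]

/-- `v` rotated counterclockwise by `π/2`. -/
def perp (v : EuclideanSpace ℝ (Fin 2)) : EuclideanSpace ℝ (Fin 2) :=
  pt (-(v 1)) (v 0)

/-- The extent of a point set `P` along a vector `v`: `max_{p,q ∈ P} ⟨p − q, v⟩`. -/
def wext (v : EuclideanSpace ℝ (Fin 2)) (P : Set (EuclideanSpace ℝ (Fin 2))) : ℝ :=
  sSup {x : ℝ | ∃ p ∈ P, ∃ q ∈ P, x = ⟪p - q, v⟫}

namespace Real

lemma mul_sin_le_mul_sin {s θ : ℝ} (hs : 0 ≤ s) (hsθ : s ≤ θ) (hθ : θ ≤ π) :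
    s * sin θ ≤ θ * sin s := by
  rcases hsθ.eq_or_lt' with rfl | hθs
  · exact le_rfl
  have hθ0 : 0 < θ := hs.trans_lt hθs
  -- `s` is the convex combination `(s/θ) • θ + (1 - s/θ) • 0` of points of `[0, π]`.
  have h := strictConcaveOn_sin_Icc.concaveOn.2 ⟨hθ0.le, hθ⟩ ⟨le_rfl, pi_pos.le⟩
    (div_nonneg hs hθ0.le) (sub_nonneg.2 ((div_le_one hθ0).2 hsθ)) (add_sub_cancel _ _)
  simp only [smul_eq_mul, mul_zero, add_zero, sin_zero, div_mul_cancel₀ _ hθ0.ne'] at h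
  rw [div_mul_eq_mul_div, div_le_iff₀ hθ0] at h
  linarith

lemma sin_le_mul_sin_of_le_mul {θ s k : ℝ} (hθ0 : 0 ≤ θ) (hθπ : θ ≤ π) (hs0 : 0 ≤ s)
    (hsπ : s ≤ π / 2) (hk : 1 ≤ k) (h : θ ≤ k * s) : sin θ ≤ k * sin s := by
  have hsin : 0 ≤ sin s := sin_nonneg_of_nonneg_of_le_pi hs0 (by linarith [pi_pos])
  rcases le_or_gt θ s with hθs | hsθ
  · calc sin θ ≤ sin s :=
          strictMonoOn_sin.monotoneOn ⟨by linarith [pi_pos], by linarith⟩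
            ⟨by linarith [pi_pos], hsπ⟩ hθs
      _ ≤ k * sin s := le_mul_of_one_le_left hsin hk
  · have hs : 0 < s := by nlinarith
    nlinarith [mul_sin_le_mul_sin hs0 hsθ.le hθπ, mul_le_mul_of_nonneg_right h hsin]

end Real

lemma perp_apply_zero (v : EuclideanSpace ℝ (Fin 2)) : perp v 0 = -v 1 := rfl

lemma perp_apply_one (v : EuclideanSpace ℝ (Fin 2)) : perp v 1 = v 0 := rfl

lemma inner_fin_two (x y : EuclideanSpace ℝ (Fin 2)) : ⟪x, y⟫ = x 0 * y 0 + x 1 * y 1 := by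
  simp [PiLp.inner_apply, Fin.sum_univ_two]; ring

lemma inner_perp_perp (x y : EuclideanSpace ℝ (Fin 2)) : ⟪perp x, perp y⟫ = ⟪x, y⟫ := by
  simp only [inner_fin_two, perp_apply_zero, perp_apply_one]; ring

lemma inner_perp_right (x y : EuclideanSpace ℝ (Fin 2)) : ⟪x, perp y⟫ = -⟪perp x, y⟫ := by
  simp only [inner_fin_two, perp_apply_zero, perp_apply_one]; ring

lemma norm_perp (v : EuclideanSpace ℝ (Fin 2)) : ‖perp v‖ = ‖v‖ := by
  rw [norm_eq_sqrt_real_inner, norm_eq_sqrt_real_inner, inner_perp_perp]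

/-- `g, perp g` is an orthonormal basis of `ℝ²` when `g` is a unit vector. -/
lemma inner_eq_inner_add_inner_perp {g : EuclideanSpace ℝ (Fin 2)} (hg : ‖g‖ = 1)
    (v w : EuclideanSpace ℝ (Fin 2)) :
    ⟪v, w⟫ = ⟪v, g⟫ * ⟪w, g⟫ + ⟪v, perp g⟫ * ⟪w, perp g⟫ := by
  have hg2 : g 0 * g 0 + g 1 * g 1 = 1 := by
    rw [← inner_fin_two, real_inner_self_eq_norm_sq, hg, one_pow]
  simp only [inner_fin_two, perp_apply_zero, perp_apply_one]
  linear_combination (-(v 0 * w 0 + v 1 * w 1)) * hg2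

lemma abs_inner_perp_eq_sin_arccos {a b : EuclideanSpace ℝ (Fin 2)} (ha : ‖a‖ = 1)
    (hb : ‖b‖ = 1) : |⟪perp a, b⟫| = sin (arccos |⟪a, b⟫|) := by
  have h := inner_eq_inner_add_inner_perp hb (perp a) (perp a)
  rw [real_inner_self_eq_norm_sq, norm_perp, ha, inner_perp_perp] at h
  rw [sin_arccos, sq_abs, ← sqrt_sq_eq_abs]
  congr 1
  linarith

section Extent

variable {P : Set (EuclideanSpace ℝ (Fin 2))}

lemma finite_inner_sub (hP : P.Finite) (v : EuclideanSpace ℝ (Fin 2)) :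
    {x : ℝ | ∃ p ∈ P, ∃ q ∈ P, x = ⟪p - q, v⟫}.Finite :=
  (hP.image2 (fun p q => ⟪p - q, v⟫) hP).subset <| by
    rintro _ ⟨p, hp, q, hq, rfl⟩
    exact ⟨p, hp, q, hq, rfl⟩

lemma inner_sub_le_wext (hP : P.Finite) (v : EuclideanSpace ℝ (Fin 2))
    {p q : EuclideanSpace ℝ (Fin 2)} (hp : p ∈ P) (hq : q ∈ P) : ⟪p - q, v⟫ ≤ wext v P :=
  le_csSup (finite_inner_sub hP v).bddAbove ⟨p, hp, q, hq, rfl⟩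

lemma abs_inner_sub_le_wext (hP : P.Finite) (v : EuclideanSpace ℝ (Fin 2))
    {p q : EuclideanSpace ℝ (Fin 2)} (hp : p ∈ P) (hq : q ∈ P) : |⟪p - q, v⟫| ≤ wext v P := by
  refine abs_le'.2 ⟨inner_sub_le_wext hP v hp hq, ?_⟩
  rw [← inner_neg_left, neg_sub]
  exact inner_sub_le_wext hP v hq hp

lemma wext_le (hP : P.Nonempty) {v : EuclideanSpace ℝ (Fin 2)} {M : ℝ}
    (h : ∀ p ∈ P, ∀ q ∈ P, ⟪p - q, v⟫ ≤ M) : wext v P ≤ M := by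
  obtain ⟨p, hp⟩ := hP
  refine csSup_le ⟨_, p, hp, p, hp, rfl⟩ ?_
  rintro _ ⟨p, hp, q, hq, rfl⟩
  exact h p hp q hq

lemma wext_nonneg (hP : P.Finite) (hP' : P.Nonempty) (v : EuclideanSpace ℝ (Fin 2)) :
    0 ≤ wext v P := by
  obtain ⟨p, hp⟩ := hP'
  simpa using inner_sub_le_wext hP v hp hp

lemma wext_le_of_dist_le (hP : P.Nonempty) {D : ℝ} (hdiam : ∀ p ∈ P, ∀ q ∈ P, dist p q ≤ D)
    {v : EuclideanSpace ℝ (Fin 2)} (hv : ‖v‖ = 1) : wext v P ≤ D :=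
  wext_le hP fun p hp q hq =>
    calc ⟪p - q, v⟫ ≤ ‖p - q‖ * ‖v‖ := real_inner_le_norm _ _
      _ = dist p q := by rw [hv, mul_one, dist_eq_norm]
      _ ≤ D := hdiam p hp q hq

lemma wext_le_abs_inner_mul_add (hP : P.Finite) (hP' : P.Nonempty)
    {g : EuclideanSpace ℝ (Fin 2)} (hg : ‖g‖ = 1) (v : EuclideanSpace ℝ (Fin 2)) :
    wext v P ≤ |⟪v, g⟫| * wext g P + |⟪v, perp g⟫| * wext (perp g) P :=
  wext_le hP' fun p hp q hq => by
    have key (w : EuclideanSpace ℝ (Fin 2)) : ⟪v, w⟫ * ⟪p - q, w⟫ ≤ |⟪v, w⟫| * wext w P :=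
      (le_abs_self _).trans <| by
        rw [abs_mul]; gcongr; exact abs_inner_sub_le_wext hP w hp hq
    rw [real_inner_comm, inner_eq_inner_add_inner_perp hg]
    exact add_le_add (key g) (key (perp g))

end Extent

section Strips

variable {P : Set (EuclideanSpace ℝ (Fin 2))} {D : ℝ}

lemma abs_inner_perp_perp_le_one {a b : EuclideanSpace ℝ (Fin 2)} (ha : ‖a‖ = 1)
    (hb : ‖b‖ = 1) : |⟪perp a, perp b⟫| ≤ 1 :=
  abs_le.2 <| real_inner_mem_Icc_of_norm_eq_one (by rwa [norm_perp]) (by rwa [norm_perp])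

lemma wext_perp_le_sin_arccos_mul_add (hP : P.Finite) (hP' : P.Nonempty)
    (hdiam : ∀ p ∈ P, ∀ q ∈ P, dist p q ≤ D) {u β : EuclideanSpace ℝ (Fin 2)}
    (hu : ‖u‖ = 1) (hβ : ‖β‖ = 1) :
    wext (perp β) P ≤ sin (arccos |⟪β, u⟫|) * D + wext (perp u) P :=
  calc wext (perp β) P
      ≤ |⟪perp β, u⟫| * wext u P + |⟪perp β, perp u⟫| * wext (perp u) P :=
        wext_le_abs_inner_mul_add hP hP' hu _
    _ ≤ |⟪perp β, u⟫| * D + 1 * wext (perp u) P := by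
        gcongr
        · exact wext_le_of_dist_le hP' hdiam hu
        · exact wext_nonneg hP hP' _
        · exact abs_inner_perp_perp_le_one hβ hu
    _ = sin (arccos |⟪β, u⟫|) * D + wext (perp u) P := by
        rw [abs_inner_perp_eq_sin_arccos hβ hu, one_mul]

lemma wext_perp_le_two_mul_wext_perp (hP : P.Finite) (hdiam : ∀ p ∈ P, ∀ q ∈ P, dist p q ≤ D)
    (hD : 0 ≤ D) {p₁ p₂ u : EuclideanSpace ℝ (Fin 2)} (hp₁ : p₁ ∈ P) (hp₂ : p₂ ∈ P)
    (hu : ‖u‖ = 1) (h₁₂ : p₁ - p₂ = D • u) {γ : EuclideanSpace ℝ (Fin 2)} (hγ : ‖γ‖ = 1) :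
    wext (perp u) P ≤ 2 * wext (perp γ) P := by
  have hP' : P.Nonempty := ⟨p₁, hp₁⟩
  have hacross : D * |⟪perp u, γ⟫| ≤ wext (perp γ) P := by
    have := abs_inner_sub_le_wext hP (perp γ) hp₁ hp₂
    rwa [h₁₂, real_inner_smul_left, abs_mul, abs_of_nonneg hD, inner_perp_right, abs_neg]
      at this
  calc wext (perp u) P
      ≤ |⟪perp u, γ⟫| * wext γ P + |⟪perp u, perp γ⟫| * wext (perp γ) P :=
        wext_le_abs_inner_mul_add hP hP' hγ _
    _ ≤ |⟪perp u, γ⟫| * D + 1 * wext (perp γ) P := by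
        gcongr
        · exact wext_le_of_dist_le hP' hdiam hγ
        · exact wext_nonneg hP hP' _
        · exact abs_inner_perp_perp_le_one hu hγ
    _ ≤ 2 * wext (perp γ) P := by linarith

end Strips

/-- Lemma 15 of the paper: if the orientation `β` is within angle `(2c+2)·arcsin z`
of the diametrical orientation `u` (where `z` is the aspect ratio of the diametric
box), then the covering strip with orientation `β` has width at most `(4c+6)` times
the minimum strip width. -/
theorem stmt_19 (P : Set (EuclideanSpace ℝ (Fin 2))) (hfin : P.Finite)
    (D : ℝ) (hD : 0 < D)
    (p₁ p₂ : EuclideanSpace ℝ (Fin 2)) (hp₁ : p₁ ∈ P) (hp₂ : p₂ ∈ P)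
    (hdiam : ∀ p ∈ P, ∀ q ∈ P, dist p q ≤ D) (hattain : dist p₁ p₂ = D)
    (u : EuclideanSpace ℝ (Fin 2)) (hu : u = D⁻¹ • (p₁ - p₂))
    (z : ℝ) (hz : z = wext (perp u) P / D)
    (c : ℝ) (hc : 0 ≤ c)
    (β : EuclideanSpace ℝ (Fin 2)) (hβ : ‖β‖ = 1)
    (hangle : Real.arccos |⟪β, u⟫| ≤ (2 * c + 2) * Real.arcsin z) :
    wext (perp β) P ≤
      (4 * c + 6) * sInf {x : ℝ | ∃ γ : EuclideanSpace ℝ (Fin 2),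
        ‖γ‖ = 1 ∧ x = wext (perp γ) P} := by
  have hP' : P.Nonempty := ⟨p₁, hp₁⟩
  have hu₁ : ‖u‖ = 1 := by
    rw [hu, norm_smul, ← dist_eq_norm, hattain, norm_inv, norm_of_nonneg hD.le,
      inv_mul_cancel₀ hD.ne']
  have h₁₂ : p₁ - p₂ = D • u := by rw [hu, smul_inv_smul₀ hD.ne']
  have hzD : wext (perp u) P = z * D := by rw [hz, div_mul_cancel₀ _ hD.ne']
  have hz₀ : 0 ≤ z := hz ▸ div_nonneg (wext_nonneg hfin hP' _) hD.le
  have hz₁ : z ≤ 1 := hz ▸ div_le_one_of_le₀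
    (wext_le_of_dist_le hP' hdiam (by rw [norm_perp, hu₁])) hD.le
  have hsin : sin (arccos |⟪β, u⟫|) ≤ (2 * c + 2) * z := by
    simpa only [sin_arcsin (by linarith) hz₁] using
      sin_le_mul_sin_of_le_mul (arccos_nonneg _) (arccos_le_pi _) (arcsin_nonneg.2 hz₀)
        (arcsin_le_pi_div_two z) (by linarith) hangle
  have hinf : z * D / 2 ≤ sInf {x : ℝ | ∃ γ : EuclideanSpace ℝ (Fin 2),
      ‖γ‖ = 1 ∧ x = wext (perp γ) P} := by
    refine le_csInf ⟨_, u, hu₁, rfl⟩ ?_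
    rintro _ ⟨γ, hγ, rfl⟩
    linarith [wext_perp_le_two_mul_wext_perp hfin hdiam hD.le hp₁ hp₂ hu₁ h₁₂ hγ]
  calc wext (perp β) P ≤ sin (arccos |⟪β, u⟫|) * D + z * D :=
        hzD ▸ wext_perp_le_sin_arccos_mul_add hfin hP' hdiam hu₁ hβ
    _ ≤ (4 * c + 6) * (z * D / 2) := by linarith [mul_le_mul_of_nonneg_right hsin hD.le]
    _ ≤ _ := by gcongr
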